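/- arXiv:1004.3036 — 3 statements merged into one kernel-verified Lean document; each statement's English description precedes it below -/
import Mathlib

section
/- (Equation connecting the corner and toothpick sequences) For every n >= 1, 4*c(n) = 2*t(n) + t(n+1). -/
/-!
Write `n = 2 ^ k + i` with `0 ≤ i < 2 ^ k`. For `1 ≤ i ≤ 2 ^ k - 2` both `c` and the combination
`2 t n + t (n + 1)` obey the same linear recurrence `f (2 ^ k + i) = 2 f i + f (i + 1)`, so the
relation propagates from `i` and `i + 1` to `2 ^ k + i` (strong induction on `n`). The two boundary
values `i = 0` and `i = 2 ^ k - 1` are where the corner sequence deviates from that recurrence, and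
its modified values there are exactly what the relation requires, using `t (2 ^ k + 1) = 4`.
-/

theorem Nat.exists_eq_two_pow_add {n : ℕ} (hn : n ≠ 0) : ∃ k i, i < 2 ^ k ∧ n = 2 ^ k + i :=
  ⟨Nat.log 2 n, n - 2 ^ Nat.log 2 n, by
    have hlo := Nat.pow_log_le_self 2 hn
    have hhi := Nat.lt_pow_succ_log_self one_lt_two n
    rw [pow_succ] at hhi
    omega⟩

structure IsToothpickSeq (t : ℕ → ℕ) : Prop where
  one : t 1 = 1
  two_pow : ∀ k, 1 ≤ k → t (2 ^ k) = 2 ^ k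
  two_pow_add : ∀ k, 1 ≤ k → ∀ i, 1 ≤ i → i ≤ 2 ^ k - 1 → t (2 ^ k + i) = 2 * t i + t (i + 1)

structure IsCornerSeq (c : ℕ → ℕ) : Prop where
  one : c 1 = 1
  two : c 2 = 2
  three : c 3 = 3
  two_pow : ∀ k, 2 ≤ k → c (2 ^ k) = 2 ^ (k - 1) + 1
  two_pow_add : ∀ k, 2 ≤ k → ∀ i, 1 ≤ i → i ≤ 2 ^ k - 2 → c (2 ^ k + i) = 2 * c i + c (i + 1)
  two_pow_succ_sub_one :
    ∀ k, 2 ≤ k → c (2 ^ (k + 1) - 1) + 1 = 2 * c (2 ^ k - 1) + c (2 ^ k)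

namespace IsToothpickSeq

variable {t : ℕ → ℕ} (ht : IsToothpickSeq t)
include ht

theorem two : t 2 = 2 := by simpa using ht.two_pow 1 le_rfl

theorem two_pow_add_one {k : ℕ} (hk : 1 ≤ k) : t (2 ^ k + 1) = 4 := by
  have hpow : 2 ≤ 2 ^ k := by simpa using Nat.pow_le_pow_right two_pos hk
  rw [ht.two_pow_add k hk 1 le_rfl (by omega), ht.one, ht.two]

theorem three : t 3 = 4 := ht.two_pow_add_one le_rfl

theorem four : t 4 = 4 := by simpa using ht.two_pow 2 (by norm_num)

end IsToothpickSeq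

section Relation

variable {t c : ℕ → ℕ} (ht : IsToothpickSeq t) (hc : IsCornerSeq c)
include ht hc

theorem corner_relation_two_pow {k : ℕ} (hk : 2 ≤ k) :
    4 * c (2 ^ k) = 2 * t (2 ^ k) + t (2 ^ k + 1) := by
  have hsplit : 2 ^ k = 2 * 2 ^ (k - 1) := by rw [← pow_succ']; congr 1; omega
  rw [hc.two_pow k hk, ht.two_pow k (by omega), ht.two_pow_add_one (by omega)]
  omega

theorem corner_relation_two_pow_add {k i : ℕ} (hk : 2 ≤ k) (hi₁ : 1 ≤ i) (hi₂ : i ≤ 2 ^ k - 2)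
    (hrel : 4 * c i = 2 * t i + t (i + 1))
    (hrel_succ : 4 * c (i + 1) = 2 * t (i + 1) + t (i + 1 + 1)) :
    4 * c (2 ^ k + i) = 2 * t (2 ^ k + i) + t (2 ^ k + i + 1) := by
  rw [add_assoc, ht.two_pow_add k (by omega) (i + 1) (by omega) (by omega),
    ht.two_pow_add k (by omega) i hi₁ (by omega), hc.two_pow_add k hk i hi₁ hi₂]
  omega

theorem corner_relation_two_pow_succ_sub_one {k : ℕ} (hk : 2 ≤ k)
    (hrel : 4 * c (2 ^ k - 1) = 2 * t (2 ^ k - 1) + t (2 ^ k)) :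
    4 * c (2 ^ (k + 1) - 1) = 2 * t (2 ^ (k + 1) - 1) + t (2 ^ (k + 1)) := by
  have hpow : 4 ≤ 2 ^ k := by simpa using Nat.pow_le_pow_right two_pos hk
  have hc_last := hc.two_pow_succ_sub_one k hk
  have ht_last := ht.two_pow_add k (by omega) (2 ^ k - 1) (by omega) le_rfl
  have hc_pow := corner_relation_two_pow ht hc hk
  rw [Nat.sub_add_cancel (by omega)] at ht_last
  rw [ht.two_pow k (by omega), ht.two_pow_add_one (by omega)] at hc_pow
  rw [ht.two_pow (k + 1) (by omega)]
  rw [pow_succ, show 2 ^ k * 2 - 1 = 2 ^ k + (2 ^ k - 1) by omega] at hc_last ⊢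
  omega

theorem corner_relation {n : ℕ} (hn : 1 ≤ n) : 4 * c n = 2 * t n + t (n + 1) := by
  induction n using Nat.strong_induction_on with
  | _ n ih =>
  rcases (show n = 1 ∨ n = 2 ∨ n = 3 ∨ 4 ≤ n by omega) with rfl | rfl | rfl | hn₄
  · rw [hc.one, ht.one, ht.two]
  · rw [hc.two, ht.two, ht.three]
  · rw [hc.three, ht.three, ht.four]
  obtain ⟨k, i, hi, rfl⟩ := Nat.exists_eq_two_pow_add (n := n) (by omega)
  have hk : 2 ≤ k := by
    by_contra! hk
    interval_cases k <;> omega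
  rcases (show i = 0 ∨ (1 ≤ i ∧ i ≤ 2 ^ k - 2) ∨ i = 2 ^ k - 1 by omega)
    with rfl | ⟨hi₁, hi₂⟩ | rfl
  · exact corner_relation_two_pow ht hc hk
  · exact corner_relation_two_pow_add ht hc hk hi₁ hi₂ (ih i (by omega) hi₁)
      (ih (i + 1) (by omega) (by omega))
  · have hlast : 2 ^ k + (2 ^ k - 1) = 2 ^ (k + 1) - 1 := by rw [pow_succ]; omega
    have hrel := ih (2 ^ k - 1) (by omega) (by omega)
    rw [Nat.sub_add_cancel (by omega)] at hrel
    rw [hlast, Nat.sub_add_cancel Nat.one_le_two_pow]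
    exact corner_relation_two_pow_succ_sub_one ht hc hk hrel

end Relation

theorem corner_toothpick_relation_general
    (t : ℕ → ℕ)
    (ht1 : t 1 = 1)
    (htpow : ∀ k, 1 ≤ k → t (2 ^ k) = 2 ^ k)
    (htrec : ∀ k, 1 ≤ k → ∀ i, 1 ≤ i → i ≤ 2 ^ k - 1 →
      t (2 ^ k + i) = 2 * t i + t (i + 1))
    (c : ℕ → ℕ)
    (hc1 : c 1 = 1) (hc2 : c 2 = 2) (hc3 : c 3 = 3)
    (hcpow : ∀ k, 2 ≤ k → c (2 ^ k) = 2 ^ (k - 1) + 1)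
    (hcrec : ∀ k, 2 ≤ k → ∀ i, 1 ≤ i → i ≤ 2 ^ k - 2 →
      c (2 ^ k + i) = 2 * c i + c (i + 1))
    (hctop : ∀ k, 2 ≤ k → c (2 ^ (k + 1) - 1) + 1 = 2 * c (2 ^ k - 1) + c (2 ^ k)) :
    ∀ n, 1 ≤ n → 4 * c n = 2 * t n + t (n + 1) :=
  fun _ => corner_relation ⟨ht1, htpow, htrec⟩ ⟨hc1, hc2, hc3, hcpow, hcrec, hctop⟩

/-- For the toothpick increment sequence `t` and the corner sequence `c`
(defined by their recurrences), `4 * c n = 2 * t n + t (n+1)` for all `n ≥ 1`. -/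
theorem corner_toothpick_relation
    (t : ℕ → ℕ)
    (ht0 : t 0 = 0) (ht1 : t 1 = 1)
    (htpow : ∀ k, 1 ≤ k → t (2 ^ k) = 2 ^ k)
    (htrec : ∀ k, 1 ≤ k → ∀ i, 1 ≤ i → i ≤ 2 ^ k - 1 →
      t (2 ^ k + i) = 2 * t i + t (i + 1))
    (c : ℕ → ℕ)
    (hc0 : c 0 = 0) (hc1 : c 1 = 1) (hc2 : c 2 = 2) (hc3 : c 3 = 3)
    (hcpow : ∀ k, 2 ≤ k → c (2 ^ k) = 2 ^ (k - 1) + 1)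
    (hcrec : ∀ k, 2 ≤ k → ∀ i, 1 ≤ i → i ≤ 2 ^ k - 2 →
      c (2 ^ k + i) = 2 * c i + c (i + 1))
    (hctop : ∀ k, 2 ≤ k → c (2 ^ (k + 1) - 1) + 1 = 2 * c (2 ^ k - 1) + c (2 ^ k)) :
    ∀ n, 1 ≤ n → 4 * c n = 2 * t n + t (n + 1) :=
  corner_toothpick_relation_general t ht1 htpow htrec c hc1 hc2 hc3 hcpow hcrec hctop
end

section
/- (Theorem 6) Let gamma and delta be integers and let n be a natural number. For every K with 2^K > n + 1, the coefficient of x^n in the polynomial prod_{k=0}^{K-1} (1 + gamma*x^(2^k - 1) + delta*x^(2^k)) in Z[x] equals the sum, over all m >= 0 with m <= wt(n+m), of gamma^m * delta^(wt(n+m) - m) * binom(wt(n+m), m), where binom denotes the binomial coefficient. (Only finitely many m satisfy m <= wt(n+m), and for m > wt(n+m) the binomial coefficient binom(wt(n+m), m) vanishes, so the sum is finite.) -/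
open Polynomial

/-- The binary weight of `n`: the number of 1s in the binary expansion of `n`. -/
def wt (n : ℕ) : ℕ := (Nat.digits 2 n).sum


lemma wt_two_mul (n : ℕ) : wt (2 * n) = wt n := by
  rcases Nat.eq_zero_or_pos n with rfl | hn
  · simp [wt]
  · rw [wt, Nat.digits_def' (by norm_num) (by omega)]
    simp [Nat.mul_div_cancel_left _ (by norm_num : 0 < 2), wt, Nat.mul_mod_right]

lemma wt_two_mul_add_one (n : ℕ) : wt (2 * n + 1) = wt n + 1 := by
  rw [wt, Nat.digits_def' (by norm_num) (by omega)]
  have h1 : (2 * n + 1) % 2 = 1 := by omega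
  have h2 : (2 * n + 1) / 2 = n := by omega
  rw [h1, h2]
  simp [wt, add_comm]

lemma wt_eq_length (n : ℕ) : wt n = n.bitIndices.length := by
  induction' n using Nat.binaryRec with b n ih
  · simp [wt]
  · cases b
    · rw [Nat.bit_false, wt_two_mul, Nat.bitIndices_two_mul, List.length_map, ih]
    · rw [Nat.bit_true, wt_two_mul_add_one, Nat.bitIndices_two_mul_add_one]
      simp [ih]

lemma wt_le_self (n : ℕ) : wt n ≤ n := by
  induction' n using Nat.binaryRec with b n ih
  · simp [wt]
  · cases b
    · show wt (2 * n) ≤ 2 * n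
      rw [wt_two_mul]; omega
    · show wt (2 * n + 1) ≤ 2 * n + 1
      rw [wt_two_mul_add_one]; omega

lemma two_pow_wt_le (n : ℕ) : 2 ^ (wt n) ≤ n + 1 := by
  induction' n using Nat.binaryRec with b n ih
  · simp [wt]
  · cases b
    · show 2 ^ wt (2 * n) ≤ 2 * n + 1
      rw [wt_two_mul]; omega
    · show 2 ^ wt (2 * n + 1) ≤ 2 * n + 1 + 1
      rw [wt_two_mul_add_one, pow_succ]; omega

lemma wt_eq_card (x : ℕ) : wt x = x.bitIndices.toFinset.card := by
  rw [wt_eq_length, List.toFinset_card_of_nodup Nat.bitIndices_sorted.nodup]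

lemma wt_sum_two_pow (t : Finset ℕ) : wt (∑ i ∈ t, 2 ^ i) = t.card := by
  rw [wt_eq_card, Finset.toFinset_bitIndices_twoPowSum]

lemma bitsF_subset_range {x K : ℕ} (hx : x < 2 ^ K) :
    x.bitIndices.toFinset ⊆ Finset.range K := by
  intro a ha
  rw [List.mem_toFinset] at ha
  have := Nat.two_pow_le_of_mem_bitIndices ha
  rw [Finset.mem_range]
  by_contra hc
  push_neg at hc
  exact absurd (le_trans (Nat.pow_le_pow_right (by norm_num) hc) this) (by omega)

lemma wt_two_pow_add {K t : ℕ} (ht : t < 2 ^ K) : wt (2 ^ K + t) = wt t + 1 := by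
  have hK : K ∉ t.bitIndices.toFinset := by
    intro hmem
    rw [List.mem_toFinset] at hmem
    exact absurd (Nat.two_pow_le_of_mem_bitIndices hmem) (by omega)
  have he : 2 ^ K + t = ∑ i ∈ insert K t.bitIndices.toFinset, 2 ^ i := by
    rw [Finset.sum_insert hK, Finset.twoPowSum_toFinset_bitIndices]
  rw [he, wt_sum_two_pow, Finset.card_insert_of_notMem hK, ← wt_eq_card]

lemma two_mul_le_two_pow (m : ℕ) : 2 * m ≤ 2 ^ m := by
  induction m with
  | zero => norm_num
  | succ k ih =>
    rcases Nat.eq_zero_or_pos k with rfl | hk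
    · norm_num
    · have : (2:ℕ) ≤ 2 ^ k := by
        calc (2:ℕ) = 2^1 := rfl
        _ ≤ 2^k := Nat.pow_le_pow_right (by norm_num) hk
      rw [pow_succ]; omega

lemma le_succ_of_le_wt {n m : ℕ} (hm : m ≤ wt (n + m)) : m ≤ n + 1 := by
  have h1 : 2 ^ m ≤ 2 ^ (wt (n + m)) := Nat.pow_le_pow_right (by norm_num) hm
  have h2 := two_pow_wt_le (n + m)
  have h3 := two_mul_le_two_pow m
  omega

lemma lt_two_pow_of_le_wt {n m K : ℕ} (h : n + 1 < 2 ^ K) (hm : m ≤ wt (n + m)) :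
    n + m < 2 ^ K := by
  by_contra hge
  push_neg at hge
  have hm1 : m ≤ n + 1 := le_succ_of_le_wt hm
  have ht : n + m - 2 ^ K < 2 ^ K := by omega
  have he : n + m = 2 ^ K + (n + m - 2 ^ K) := by omega
  have := wt_two_pow_add ht
  have := wt_le_self (n + m - 2 ^ K)
  rw [he] at hm
  omega


lemma coeff_gd (γ δ : ℤ) (s j : ℕ) :
    ((C γ + C δ * X : ℤ[X]) ^ s).coeff j = γ ^ (s - j) * δ ^ j * (s.choose j : ℤ) := by
  rw [add_pow, finset_sum_coeff]
  have hterm : ∀ k, ((C γ) ^ k * (C δ * X) ^ (s - k) * ((s.choose k : ℕ) : ℤ[X])).coeff j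
      = if s - k = j then γ ^ k * δ ^ (s - k) * (s.choose k : ℤ) else 0 := by
    intro k
    have hrw : (C γ) ^ k * (C δ * X) ^ (s - k) * ((s.choose k : ℕ) : ℤ[X])
        = C (γ ^ k * δ ^ (s - k) * (s.choose k : ℤ)) * X ^ (s - k) := by
      rw [C_mul, C_mul, C_pow, C_pow, C_eq_natCast]
      ring
    rw [hrw, coeff_C_mul, coeff_X_pow]
    simp [eq_comm]
  rw [Finset.sum_congr rfl fun k _ => hterm k]
  by_cases hj : j ≤ s
  · rw [Finset.sum_eq_single (s - j)]
    · have h1 : s - (s - j) = j := by omega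
      rw [if_pos h1, h1, Nat.choose_symm hj]
    · intro k hk hne
      rw [Finset.mem_range] at hk
      rw [if_neg (by omega)]
    · intro hmem
      exact absurd (Finset.mem_range.2 (by omega)) hmem
  · rw [Finset.sum_eq_zero, Nat.choose_eq_zero_of_lt (by omega), Nat.cast_zero, mul_zero]
    intro k hk
    rw [Finset.mem_range] at hk
    rw [if_neg (by omega)]

lemma factor_eq (γ δ : ℤ) (k : ℕ) :
    C γ * X ^ (2 ^ k - 1) + C δ * X ^ (2 ^ k)
      = X ^ (2 ^ k - 1) * (C γ + C δ * X : ℤ[X]) := by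
  obtain ⟨e, he⟩ : ∃ e, 2 ^ k = e + 1 := ⟨2 ^ k - 1, by
    have := Nat.one_le_two_pow (n := k); omega⟩
  rw [he, Nat.add_sub_cancel]
  ring

lemma prod_subset_eq (γ δ : ℤ) (t : Finset ℕ) :
    (∏ k ∈ t, (C γ * X ^ (2 ^ k - 1) + C δ * X ^ (2 ^ k)) : ℤ[X])
      = X ^ ((∑ k ∈ t, 2 ^ k) - t.card) * (C γ + C δ * X) ^ t.card := by
  have hsum : (∑ k ∈ t, (2 ^ k - 1)) = (∑ k ∈ t, 2 ^ k) - t.card := by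
    have h1 : (∑ k ∈ t, (2 ^ k - 1)) + t.card = ∑ k ∈ t, 2 ^ k := by
      rw [Finset.card_eq_sum_ones, ← Finset.sum_add_distrib]
      exact Finset.sum_congr rfl fun k _ => by
        have := Nat.one_le_two_pow (n := k); omega
    omega
  calc (∏ k ∈ t, (C γ * X ^ (2 ^ k - 1) + C δ * X ^ (2 ^ k)) : ℤ[X])
      = ∏ k ∈ t, (X ^ (2 ^ k - 1) * (C γ + C δ * X)) :=
        Finset.prod_congr rfl fun k _ => factor_eq γ δ k
    _ = (∏ k ∈ t, X ^ (2 ^ k - 1)) * (C γ + C δ * X) ^ t.card := by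
        rw [Finset.prod_mul_distrib, Finset.prod_const]
    _ = X ^ ((∑ k ∈ t, 2 ^ k) - t.card) * (C γ + C δ * X) ^ t.card := by
        rw [Finset.prod_pow_eq_pow_sum, hsum]

/-- **Theorem 6.** Let `γ, δ` be integers and `n` a natural number.  For every
`K` with `2^K > n + 1`, the coefficient of `x^n` in
`∏_{k=0}^{K-1} (1 + γ x^(2^k - 1) + δ x^(2^k))` equals the sum, over all `m ≥ 0`
with `m ≤ wt (n+m)`, of `γ^m δ^(wt(n+m) - m) C(wt(n+m), m)` (a finite sum). -/
theorem coeff_prod_explicit_formula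
    (γ δ : ℤ) (n K : ℕ) (h : n + 1 < 2 ^ K) :
    (∏ k ∈ Finset.range K,
        (1 + C γ * X ^ (2 ^ k - 1) + C δ * X ^ (2 ^ k))).coeff n =
      ∑ᶠ m ∈ {m : ℕ | m ≤ wt (n + m)},
        γ ^ m * δ ^ (wt (n + m) - m) * ((wt (n + m)).choose m : ℤ) := by
  classical
  set F : ℕ → ℤ := fun m => γ ^ m * δ ^ (wt (n + m) - m) * ((wt (n + m)).choose m : ℤ)
    with hF
  set A : Finset ℕ := (Finset.range (n + 2)).filter (fun m => m ≤ wt (n + m)) with hA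
  -- RHS: finsum to finite sum
  have hset : {m : ℕ | m ≤ wt (n + m)} = ↑A := by
    ext m
    simp only [Set.mem_setOf_eq, hA, Finset.coe_filter, Finset.mem_range,
      Set.mem_setOf_eq]
    exact ⟨fun hm => ⟨by have := le_succ_of_le_wt hm; omega, hm⟩, fun hm => hm.2⟩
  rw [hset, finsum_mem_coe_finset]
  -- expand the product
  have hprod : (∏ k ∈ Finset.range K,
        (1 + C γ * X ^ (2 ^ k - 1) + C δ * X ^ (2 ^ k)) : ℤ[X])
      = ∑ t ∈ (Finset.range K).powerset,
          ∏ k ∈ t, (C γ * X ^ (2 ^ k - 1) + C δ * X ^ (2 ^ k)) := by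
    rw [Finset.prod_congr rfl (fun k _ => by
      show (1 + C γ * X ^ (2 ^ k - 1) + C δ * X ^ (2 ^ k) : ℤ[X])
        = (C γ * X ^ (2 ^ k - 1) + C δ * X ^ (2 ^ k)) + 1
      ring), Finset.prod_add]
    simp
  -- the coefficient of each subproduct
  set σ : Finset ℕ → ℕ := fun t => ∑ k ∈ t, 2 ^ k with hσ
  set g : Finset ℕ → ℤ := fun t =>
    if σ t - t.card ≤ n then
      γ ^ (t.card - (n - (σ t - t.card))) * δ ^ (n - (σ t - t.card)) *
        ((t.card.choose (n - (σ t - t.card)) : ℕ) : ℤ)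
    else 0 with hg
  have hcard_le : ∀ t : Finset ℕ, t.card ≤ σ t := by
    intro t
    rw [hσ, Finset.card_eq_sum_ones]
    exact Finset.sum_le_sum fun k _ => Nat.one_le_two_pow
  have hcoeff : ∀ t : Finset ℕ,
      ((∏ k ∈ t, (C γ * X ^ (2 ^ k - 1) + C δ * X ^ (2 ^ k)) : ℤ[X])).coeff n = g t := by
    intro t
    rw [prod_subset_eq, mul_comm, coeff_mul_X_pow', hg]
    simp only [hσ]
    split_ifs with hle
    · rw [coeff_gd]
    · rfl
  rw [hprod, finset_sum_coeff, Finset.sum_congr rfl (fun t _ => hcoeff t)]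
  -- reindex: i : A → powerset
  set i : ℕ → Finset ℕ := fun m => (n + m).bitIndices.toFinset with hi
  have hσi : ∀ m, σ (i m) = n + m := fun m => Finset.twoPowSum_toFinset_bitIndices _
  have hcardi : ∀ m, (i m).card = wt (n + m) := fun m => (wt_eq_card _).symm
  have hinj : ∀ m1 ∈ A, ∀ m2 ∈ A, i m1 = i m2 → m1 = m2 := by
    intro m1 _ m2 _ heq
    have := congrArg σ heq
    rw [hσi, hσi] at this
    omega
  have hsub : A.image i ⊆ (Finset.range K).powerset := by
    intro t ht
    obtain ⟨m, hm, rfl⟩ := Finset.mem_image.mp ht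
    rw [hA, Finset.mem_filter] at hm
    exact Finset.mem_powerset.mpr (bitsF_subset_range (lt_two_pow_of_le_wt h hm.2))
  have hzero : ∀ t ∈ (Finset.range K).powerset, t ∉ A.image i → g t = 0 := by
    intro t _ hnot
    by_contra hne
    apply hnot
    rw [hg] at hne
    simp only at hne
    have hle : σ t - t.card ≤ n := by
      by_contra hc; rw [if_neg hc] at hne; exact hne rfl
    rw [if_pos hle] at hne
    have hchoose : n - (σ t - t.card) ≤ t.card := by
      by_contra hc
      push_neg at hc
      rw [Nat.choose_eq_zero_of_lt hc] at hne
      simp at hne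
    have hcs := hcard_le t
    have hnσ : n ≤ σ t := by omega
    set m := σ t - n with hm
    have hnm : n + m = σ t := by omega
    have hwt : m ≤ wt (n + m) := by
      rw [hnm, wt_sum_two_pow]; omega
    refine Finset.mem_image.mpr ⟨m, ?_, ?_⟩
    · rw [hA, Finset.mem_filter, Finset.mem_range]
      exact ⟨by have := le_succ_of_le_wt hwt; omega, hwt⟩
    · rw [hi]
      simp only
      rw [hnm, hσ]
      exact Finset.toFinset_bitIndices_twoPowSum t
  rw [← Finset.sum_subset hsub hzero, Finset.sum_image hinj]
  refine Finset.sum_congr rfl fun m hm => ?_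
  rw [hA, Finset.mem_filter] at hm
  obtain ⟨-, hwt⟩ := hm
  rw [hg]
  simp only
  rw [hσi, hcardi]
  have hle' : wt (n + m) ≤ n + m := wt_le_self (n + m)
  set s := wt (n + m) with hs
  have h1 : n + m - s ≤ n := by omega
  rw [if_pos h1]
  have h2 : n - (n + m - s) = s - m := by omega
  have h3 : s - (s - m) = m := by omega
  rw [h2, h3, Nat.choose_symm hwt]
end

section
/- (Intermediate claim in the proof of Theorem 7, Equations (EqTP5), (EqTP7), (EqTP8)) Define F : N -> N by F(0) = 4, F(1) = 8, F(2) = F(3) = 12, and, for each k >= 2: F(2^k + i) = 2*F(i) + F(i+1) for 0 <= i <= 2^k - 3; F(2^(k+1) - 2) = 2*F(2^k - 2) + F(2^k - 1) - 4; and F(2^(k+1) - 1) = 2^(k+2) + 4. Then for every n in N and every K with 2^K > n + 1, F(n) = 2 * (the coefficient of x^n in the polynomial prod_{k=0}^{K-1} (1 + x^(2^k - 1) + 2*x^(2^k)) in Z[x]), and consequently F(n) = 2 * (the sum, over all m >= 0 with m <= wt(n+m), of 2^(wt(n+m) - m) * binom(wt(n+m), m)). -/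
/-!
Since `1 + X ^ (2 ^ k - 1) + 2 * X ^ (2 ^ k) = 1 + X ^ (2 ^ k - 1) * (1 + 2 * X)`, expanding the
product over `k < K` picks out the binary digits of some `s < 2 ^ K`, and the product equals
`∑ s < 2 ^ K, X ^ (s - wt s) * (1 + 2 * X) ^ wt s`. For `s = n + m` the coefficient of `X ^ n` in
the summand is `2 ^ (wt s - m) * C(wt s, m)`, and it vanishes for `s < n`; this is the closed form.
The recursion for `F` determines `F` uniquely, and multiplying by the `K`-th factor shows that
twice the stable coefficients satisfy it.
-/

open Polynomial

lemma wt_eq_mod_two_add_wt_div_two (n : ℕ) : wt n = n % 2 + wt (n / 2) := by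
  rcases Nat.eq_zero_or_pos n with rfl | hn
  · simp [wt]
  · simp [wt, Nat.digits_def' one_lt_two hn]

lemma wt_two_pow_add_s15 {L r : ℕ} (hr : r < 2 ^ L) : wt (2 ^ L + r) = wt r + 1 := by
  induction L generalizing r with
  | zero =>
    obtain rfl : r = 0 := by simpa using hr
    simp [wt]
  | succ L ih =>
    rw [wt_eq_mod_two_add_wt_div_two, wt_eq_mod_two_add_wt_div_two r, pow_succ,
      show (2 ^ L * 2 + r) / 2 = 2 ^ L + r / 2 by omega, ih (by rw [pow_succ] at hr; omega)]
    omega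

lemma wt_two_pow_sub_one (k : ℕ) : wt (2 ^ k - 1) = k := by
  induction k with
  | zero => simp [wt]
  | succ k ih =>
    have hk := Nat.one_le_two_pow (n := k)
    rw [show 2 ^ (k + 1) - 1 = 2 ^ k + (2 ^ k - 1) by rw [pow_succ]; omega,
      wt_two_pow_add_s15 (by omega), ih]

lemma add_lt_two_pow_of_le_wt {n m K : ℕ} (hK : n + 1 < 2 ^ K) (hm : m ≤ wt (n + m)) :
    n + m < 2 ^ K := by
  by_contra! hle
  have hpos : n + m ≠ 0 := by have := Nat.one_le_two_pow (n := K); omega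
  set L := Nat.log 2 (n + m)
  have hL : 2 ^ L ≤ n + m := Nat.pow_log_le_self 2 hpos
  have hL' : n + m < 2 ^ L * 2 := pow_succ 2 L ▸ Nat.lt_pow_succ_log_self one_lt_two _
  have hKL : 2 ^ K ≤ 2 ^ L :=
    Nat.pow_le_pow_right two_pos ((Nat.le_log_iff_pow_le one_lt_two hpos).mpr hle)
  have hwt := wt_le_self (n + m - 2 ^ L)
  rw [show n + m = 2 ^ L + (n + m - 2 ^ L) by omega, wt_two_pow_add_s15 (by omega)] at hm
  omega

lemma coeff_one_add_two_mul_X_pow {R : Type*} [CommSemiring R] (w j : ℕ) :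
    ((1 + 2 * X : R[X]) ^ w).coeff j = 2 ^ j * w.choose j := by
  have hterm (k : ℕ) : ((2 * X : R[X]) ^ k * 1 ^ (w - k) * (w.choose k : R[X])).coeff j =
      if j = k then (2 : R) ^ j * w.choose j else 0 := by
    rw [one_pow, mul_one, mul_pow, ← C_eq_natCast, coeff_mul_C, show (2 : R[X]) = C 2 from rfl,
      ← C_pow, coeff_C_mul_X_pow]
    split_ifs with h <;> simp [h]
  simp only [add_comm (1 : R[X]), add_pow, finsetSum_coeff, hterm, Finset.sum_ite_eq,
    Finset.mem_range]
  split_ifs with h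
  · rfl
  · simp [Nat.choose_eq_zero_of_lt (not_lt.mp h)]

def wtTerm (n m : ℕ) : ℕ := 2 ^ (wt (n + m) - m) * (wt (n + m)).choose m

noncomputable def wtSum (n : ℕ) : ℕ := ∑ᶠ m ∈ {m : ℕ | m ≤ wt (n + m)}, wtTerm n m

lemma wtSum_eq_sum_range {n K : ℕ} (hK : n + 1 < 2 ^ K) :
    wtSum n = ∑ m ∈ Finset.range (2 ^ K - n), wtTerm n m := by
  refine finsum_cond_eq_sum_of_cond_iff _ fun {m} hm => ?_
  have hle : m ≤ wt (n + m) := by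
    by_contra! h
    exact hm (by rw [wtTerm, Nat.choose_eq_zero_of_lt h, mul_zero])
  have := add_lt_two_pow_of_le_wt hK hle
  exact ⟨fun _ => Finset.mem_range.mpr (by omega), fun _ => hle⟩

noncomputable def trinomialProd (R : Type*) [CommSemiring R] (K : ℕ) : R[X] :=
  ∏ k ∈ Finset.range K, (1 + X ^ (2 ^ k - 1) + 2 * X ^ (2 ^ k))

section trinomialProd

variable {R : Type*} [CommSemiring R]

lemma trinomialProd_succ (K : ℕ) :
    trinomialProd R (K + 1) = trinomialProd R K * (1 + X ^ (2 ^ K - 1) + 2 * X ^ (2 ^ K)) :=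
  Finset.prod_range_succ _ _

lemma trinomialProd_eq_sum (K : ℕ) :
    trinomialProd R K =
      ∑ s ∈ Finset.range (2 ^ K), X ^ (s - wt s) * (1 + 2 * X) ^ wt s := by
  induction K with
  | zero => simp [trinomialProd, wt]
  | succ K ih =>
    obtain ⟨e, he⟩ : ∃ e, 2 ^ K = e + 1 :=
      ⟨2 ^ K - 1, by have := Nat.one_le_two_pow (n := K); omega⟩
    have hhigh (r : ℕ) (hr : r < 2 ^ K) :
        X ^ (2 ^ K + r - wt (2 ^ K + r)) * (1 + 2 * X : R[X]) ^ wt (2 ^ K + r) =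
          X ^ e * (1 + 2 * X) * (X ^ (r - wt r) * (1 + 2 * X) ^ wt r) := by
      rw [wt_two_pow_add_s15 hr, show 2 ^ K + r - (wt r + 1) = e + (r - wt r) by
        have := wt_le_self r; omega]
      ring
    rw [trinomialProd_succ, ih, pow_succ, mul_two, Finset.sum_range_add,
      Finset.sum_congr rfl fun r hr => hhigh r (Finset.mem_range.mp hr), ← Finset.mul_sum, he,
      Nat.add_sub_cancel]
    ring

lemma coeff_X_pow_sub_wt_mul_of_lt {s n : ℕ} (h : s < n) :
    (X ^ (s - wt s) * (1 + 2 * X : R[X]) ^ wt s).coeff n = 0 := by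
  rw [coeff_X_pow_mul', if_pos (by omega), coeff_one_add_two_mul_X_pow,
    Nat.choose_eq_zero_of_lt (by have := wt_le_self s; omega), Nat.cast_zero, mul_zero]

lemma coeff_X_pow_sub_wt_mul_add (n m : ℕ) :
    (X ^ (n + m - wt (n + m)) * (1 + 2 * X : R[X]) ^ wt (n + m)).coeff n = (wtTerm n m : R) := by
  have hw := wt_le_self (n + m)
  rw [coeff_X_pow_mul', wtTerm]
  split_ifs with h
  · rw [coeff_one_add_two_mul_X_pow, show n - (n + m - wt (n + m)) = wt (n + m) - m by omega,
      Nat.choose_symm (by omega)]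
    push_cast
    rfl
  · rw [Nat.choose_eq_zero_of_lt (by omega), mul_zero, Nat.cast_zero]

lemma coeff_trinomialProd (K n : ℕ) :
    (trinomialProd R K).coeff n = ∑ m ∈ Finset.range (2 ^ K - n), (wtTerm n m : R) := by
  rw [trinomialProd_eq_sum, finsetSum_coeff]
  rcases le_or_gt n (2 ^ K) with h | h
  · obtain ⟨d, hd⟩ := Nat.exists_eq_add_of_le h
    rw [hd, Finset.sum_range_add, Finset.sum_eq_zero fun s hs =>
      coeff_X_pow_sub_wt_mul_of_lt (Finset.mem_range.mp hs), zero_add, Nat.add_sub_cancel_left]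
    exact Finset.sum_congr rfl fun m _ => coeff_X_pow_sub_wt_mul_add n m
  · rw [Nat.sub_eq_zero_of_le h.le, Finset.sum_range_zero]
    exact Finset.sum_eq_zero fun s hs =>
      coeff_X_pow_sub_wt_mul_of_lt ((Finset.mem_range.mp hs).trans h)

lemma coeff_trinomialProd_eq_wtSum {n K : ℕ} (hK : n + 1 < 2 ^ K) :
    (trinomialProd R K).coeff n = wtSum n := by
  rw [coeff_trinomialProd, wtSum_eq_sum_range hK, Nat.cast_sum]

lemma coeff_trinomialProd_of_two_pow_le {K n : ℕ} (h : 2 ^ K ≤ n) :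
    (trinomialProd R K).coeff n = 0 := by
  rw [coeff_trinomialProd, Nat.sub_eq_zero_of_le h, Finset.sum_range_zero]

lemma coeff_trinomialProd_two_pow_sub_one (K : ℕ) :
    (trinomialProd R K).coeff (2 ^ K - 1) = 2 ^ K := by
  rw [coeff_trinomialProd, show 2 ^ K - (2 ^ K - 1) = 1 by
    have := Nat.one_le_two_pow (n := K); omega]
  simp [wtTerm, wt_two_pow_sub_one]

lemma coeff_trinomialProd_succ (K n : ℕ) :
    (trinomialProd R (K + 1)).coeff n =
      (trinomialProd R K).coeff n
        + (if 2 ^ K - 1 ≤ n then (trinomialProd R K).coeff (n - (2 ^ K - 1)) else 0)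
        + 2 * (if 2 ^ K ≤ n then (trinomialProd R K).coeff (n - 2 ^ K) else 0) := by
  rw [trinomialProd_succ, mul_add, mul_add, mul_one, coeff_add, coeff_add, coeff_mul_X_pow',
    mul_left_comm, coeff_ofNat_mul, coeff_mul_X_pow']

end trinomialProd

lemma wtSum_zero : wtSum 0 = 2 := by
  rw [wtSum_eq_sum_range (K := 1) (by norm_num)]
  norm_num [Finset.sum_range_succ, wtTerm, wt]

lemma wtSum_one : wtSum 1 = 4 := by
  rw [wtSum_eq_sum_range (K := 2) (by norm_num)]
  norm_num [Finset.sum_range_succ, wtTerm, wt]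

lemma wtSum_two : wtSum 2 = 6 := by
  rw [wtSum_eq_sum_range (K := 2) (by norm_num)]
  norm_num [Finset.sum_range_succ, wtTerm, wt]

lemma wtSum_three : wtSum 3 = 6 := by
  rw [wtSum_eq_sum_range (K := 3) (by norm_num)]
  norm_num [Finset.sum_range_succ, wtTerm, wt]

lemma wtSum_two_pow_add {k i : ℕ} (hi : i + 2 < 2 ^ k) :
    wtSum (2 ^ k + i) = 2 * wtSum i + wtSum (i + 1) := by
  have h := coeff_trinomialProd_succ (R := ℕ) k (2 ^ k + i)
  rw [coeff_trinomialProd_eq_wtSum (by rw [pow_succ]; omega),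
    coeff_trinomialProd_of_two_pow_le (by omega), if_pos (by omega), if_pos (by omega),
    show 2 ^ k + i - (2 ^ k - 1) = i + 1 by omega, Nat.add_sub_cancel_left,
    coeff_trinomialProd_eq_wtSum hi, coeff_trinomialProd_eq_wtSum (by omega)] at h
  simp only [Nat.cast_id] at h
  omega

lemma wtSum_two_pow_sub_one {k : ℕ} (hk : 1 ≤ k) : wtSum (2 ^ k - 1) = 2 ^ k + 2 := by
  have h2k : 2 ≤ 2 ^ k := Nat.le_self_pow (by omega) 2
  have h := coeff_trinomialProd_succ (R := ℕ) k (2 ^ k - 1)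
  rw [coeff_trinomialProd_eq_wtSum (by rw [pow_succ]; omega), coeff_trinomialProd_two_pow_sub_one,
    if_pos le_rfl, if_neg (by omega), Nat.sub_self, coeff_trinomialProd_eq_wtSum (by omega),
    wtSum_zero] at h
  simpa using h

lemma wtSum_two_pow_succ_sub_two {k : ℕ} (hk : 1 ≤ k) :
    wtSum (2 ^ (k + 1) - 2) = 2 * wtSum (2 ^ k - 2) + 2 ^ k := by
  have h2k : 2 ≤ 2 ^ k := Nat.le_self_pow (by omega) 2
  have h := coeff_trinomialProd_succ (R := ℕ) k (2 ^ (k + 1) - 2)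
  rw [pow_succ] at h ⊢
  rw [coeff_trinomialProd_eq_wtSum (by rw [pow_succ]; omega),
    coeff_trinomialProd_of_two_pow_le (by omega), if_pos (by omega), if_pos (by omega),
    show 2 ^ k * 2 - 2 - (2 ^ k - 1) = 2 ^ k - 1 by omega,
    show 2 ^ k * 2 - 2 - 2 ^ k = 2 ^ k - 2 by omega, coeff_trinomialProd_two_pow_sub_one,
    coeff_trinomialProd_eq_wtSum (by omega)] at h
  simp only [Nat.cast_id] at h
  omega

structure IsFRecurrence (F : ℕ → ℕ) : Prop where
  zero : F 0 = 4
  one : F 1 = 8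
  two : F 2 = 12
  three : F 3 = 12
  two_pow_add : ∀ k, 2 ≤ k → ∀ i, i ≤ 2 ^ k - 3 → F (2 ^ k + i) = 2 * F i + F (i + 1)
  two_pow_succ_sub_two : ∀ k, 2 ≤ k →
    F (2 ^ (k + 1) - 2) + 4 = 2 * F (2 ^ k - 2) + F (2 ^ k - 1)
  two_pow_succ_sub_one : ∀ k, 2 ≤ k → F (2 ^ (k + 1) - 1) = 2 ^ (k + 2) + 4

theorem IsFRecurrence.unique {F G : ℕ → ℕ} (hF : IsFRecurrence F) (hG : IsFRecurrence G) :
    F = G := by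
  funext n
  induction n using Nat.strong_induction_on with
  | _ n ih =>
    match n with
    | 0 => rw [hF.zero, hG.zero]
    | 1 => rw [hF.one, hG.one]
    | 2 => rw [hF.two, hG.two]
    | 3 => rw [hF.three, hG.three]
    | n + 4 =>
      set k := Nat.log 2 (n + 4)
      have hle : 2 ^ k ≤ n + 4 := Nat.pow_log_le_self 2 (by omega)
      have hlt : n + 4 < 2 ^ k * 2 := pow_succ 2 k ▸ Nat.lt_pow_succ_log_self one_lt_two _
      have hk : 2 ≤ k := by
        by_contra! hk
        interval_cases k <;> omega
      have h4 : 4 ≤ 2 ^ k := Nat.pow_le_pow_right two_pos hk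
      obtain ⟨i, hi⟩ := Nat.exists_eq_add_of_le hle
      rw [hi] at ih hlt ⊢
      rcases lt_trichotomy i (2 ^ k - 2) with h | h | h
      · rw [hF.two_pow_add k hk i (by omega), hG.two_pow_add k hk i (by omega),
          ih i (by omega), ih (i + 1) (by omega)]
      · have hF' := hF.two_pow_succ_sub_two k hk
        have hG' := hG.two_pow_succ_sub_two k hk
        rw [ih (2 ^ k - 2) (by omega), ih (2 ^ k - 1) (by omega), ← hG'] at hF'
        rw [pow_succ, show 2 ^ k * 2 - 2 = 2 ^ k + i by omega] at hF' hG'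
        omega
      · rw [show 2 ^ k + i = 2 ^ (k + 1) - 1 by rw [pow_succ]; omega,
          hF.two_pow_succ_sub_one k hk, hG.two_pow_succ_sub_one k hk]

theorem isFRecurrence_two_mul_wtSum : IsFRecurrence (fun n => 2 * wtSum n) where
  zero := by rw [wtSum_zero]
  one := by rw [wtSum_one]
  two := by rw [wtSum_two]
  three := by rw [wtSum_three]
  two_pow_add k hk i hi := by
    have : 4 ≤ 2 ^ k := Nat.pow_le_pow_right two_pos hk
    rw [wtSum_two_pow_add (by omega)]
    ring
  two_pow_succ_sub_two k hk := by
    rw [wtSum_two_pow_succ_sub_two (by omega), wtSum_two_pow_sub_one (by omega)]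
    ring
  two_pow_succ_sub_one k hk := by
    rw [wtSum_two_pow_sub_one (by omega), pow_succ 2 (k + 1)]
    ring

/-- **(EqTP5), (EqTP7), (EqTP8).** Let `F` satisfy `F 0 = 4`, `F 1 = 8`,
`F 2 = F 3 = 12`, and for each `k ≥ 2`: `F (2^k + i) = 2 F i + F (i+1)` for
`0 ≤ i ≤ 2^k - 3`, `F (2^(k+1) - 2) = 2 F (2^k - 2) + F (2^k - 1) - 4`, and
`F (2^(k+1) - 1) = 2^(k+2) + 4`.  Then for every `n` and every `K` with
`2^K > n + 1`, `F n` equals twice the coefficient of `x^n` in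
`∏_{k=0}^{K-1} (1 + x^(2^k - 1) + 2 x^(2^k))` in `ℤ[x]`, and consequently
`F n = 2 ∑_{m ≥ 0, m ≤ wt(n+m)} 2^(wt(n+m)-m) C(wt(n+m), m)`. -/
theorem F_generating_function_and_formula
    (F : ℕ → ℕ)
    (hF0 : F 0 = 4) (hF1 : F 1 = 8) (hF2 : F 2 = 12) (hF3 : F 3 = 12)
    (hFrec : ∀ k, 2 ≤ k → ∀ i, i ≤ 2 ^ k - 3 →
      F (2 ^ k + i) = 2 * F i + F (i + 1))
    (hFmid : ∀ k, 2 ≤ k →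
      F (2 ^ (k + 1) - 2) + 4 = 2 * F (2 ^ k - 2) + F (2 ^ k - 1))
    (hFtop : ∀ k, 2 ≤ k → F (2 ^ (k + 1) - 1) = 2 ^ (k + 2) + 4) :
    (∀ n K, n + 1 < 2 ^ K →
      (F n : ℤ) =
        2 * ((∏ k ∈ Finset.range K,
              (1 + X ^ (2 ^ k - 1) + 2 * X ^ (2 ^ k)) : Polynomial ℤ)).coeff n) ∧
    (∀ n, F n =
        2 * ∑ᶠ m ∈ {m : ℕ | m ≤ wt (n + m)},
              2 ^ (wt (n + m) - m) * (wt (n + m)).choose m) := by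
  have hF : F = fun n => 2 * wtSum n :=
    IsFRecurrence.unique ⟨hF0, hF1, hF2, hF3, hFrec, hFmid, hFtop⟩ isFRecurrence_two_mul_wtSum
  subst hF
  refine ⟨fun n K hK => ?_, fun n => rfl⟩
  rw [← trinomialProd, coeff_trinomialProd_eq_wtSum hK]
  push_cast
  rfl
end
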